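/- Let G be a topological group, Y a Hausdorff locally convex real topological vector space, and π a representation of G by continuous linear operators on Y such that the action map G × Y → Y, (g, y) ↦ π(g)y, is continuous and such that there is a neighborhood V of the identity in G for which the family of operators {π(g) : g ∈ V} is equicontinuous. Let y ∈ Y be such that dπ(Z)y exists for every one-parameter subgroup Z of G. If X, X₁, X₂ are one-parameter subgroups of G with X = X₁ + X₂ in the Trotter sense, then dπ(X)y = dπ(X₁)y + dπ(X₂)y. -/

import Mathlib

open Filter Topology Pointwise

/-- A one-parameter subgroup of a topological group `G`: a continuous homomorphism
from the additive group of reals into `G`. -/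
structure OneParamSubgroup (G : Type*) [Group G] [TopologicalSpace G] where
  toFun : ℝ → G
  continuous_toFun : Continuous toFun
  map_add : ∀ s t : ℝ, toFun (s + t) = toFun s * toFun t

/-- `X = X₁ + X₂` in the Trotter sense: `(X₁(t/n) X₂(t/n))^n → X(t)` uniformly on
compact subsets of `ℝ`. -/
def TrotterSum {G : Type*} [Group G] [TopologicalSpace G]
    (X X₁ X₂ : OneParamSubgroup G) : Prop :=
  ∀ K : Set ℝ, IsCompact K → ∀ W ∈ 𝓝 (1 : G), ∃ N : ℕ, ∀ n : ℕ, N ≤ n → ∀ t ∈ K,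
    (X.toFun t)⁻¹ * (X₁.toFun (t / (n : ℝ)) * X₂.toFun (t / (n : ℝ))) ^ n ∈ W

/-- `(D_X φ)(g)` exists and equals `z`. -/
def HasDirDerivAt {G Y : Type*} [Group G] [TopologicalSpace G]
    [AddCommGroup Y] [Module ℝ Y] [TopologicalSpace Y]
    (φ : G → Y) (X : OneParamSubgroup G) (g : G) (z : Y) : Prop :=
  Tendsto (fun t : ℝ => t⁻¹ • (φ (g * X.toFun t) - φ g)) (𝓝[≠] (0 : ℝ)) (𝓝 z)

/-- `φ : G → Y` is locally left uniformly continuous. -/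
def LocallyLeftUC {G Y : Type*} [Group G] [TopologicalSpace G]
    [AddCommGroup Y] [TopologicalSpace Y] (φ : G → Y) : Prop :=
  ∀ g₀ : G, ∃ V ∈ 𝓝 g₀, ∀ U ∈ 𝓝 (0 : Y), ∃ W ∈ 𝓝 (1 : G),
    ∀ x ∈ V, ∀ y ∈ V, x⁻¹ * y ∈ W → φ x - φ y ∈ U

/-- `φ` is of class LUC¹, with `D X g = (D_X φ)(g)`. -/
def IsLUC1 {G Y : Type*} [Group G] [TopologicalSpace G]
    [AddCommGroup Y] [Module ℝ Y] [TopologicalSpace Y]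
    (φ : G → Y) (D : OneParamSubgroup G → G → Y) : Prop :=
  LocallyLeftUC φ ∧ (∀ X g, HasDirDerivAt φ X g (D X g)) ∧
    ∀ X, LocallyLeftUC (D X)

/-!
Write `v s = s⁻¹ • (π (X₁ s * X₂ s) y - y)`; by the product rule `v s → dπ(X₁)y + dπ(X₂)y =: w`.
With `g = X₁ (t/n) * X₂ (t/n)`, telescoping `π (g ^ n) y - y = ∑ k < n, π (g ^ k) (π g y - y)`
shows that `t⁻¹ • (π (g ^ n) y - y) - w` is the average of the vectors `π (g ^ k) (v (t/n)) - w`,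
`k < n`. For small `t > 0` and large `n` all powers `g ^ k`, `k < n`, lie in a fixed small
neighbourhood of `1` (the Trotter formula puts `g ^ k` near `X (k t / n)`), so by joint continuity
of the action these vectors lie in a given closed convex neighbourhood of `0`, hence so does the
average and, letting `n → ∞`, so does `t⁻¹ • (π (X t) y - y) - w`. Thus `dπ(X)y = w`.
-/

open Finset

namespace OneParamSubgroup

variable {G : Type*} [Group G] [TopologicalSpace G]

lemma map_zero (X : OneParamSubgroup G) : X.toFun 0 = 1 := by
  simpa using X.map_add 0 0

lemma tendsto_nhds_zero (X : OneParamSubgroup G) : Tendsto X.toFun (𝓝 0) (𝓝 1) :=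
  X.map_zero ▸ X.continuous_toFun.tendsto 0

end OneParamSubgroup

lemma Filter.Tendsto.eventually_forall_lt_pow_mem {M α : Type*} [Monoid M] [TopologicalSpace M]
    [ContinuousMul M] {l : Filter α} {f : α → M} (hf : Tendsto f l (𝓝 1)) {S : Set M}
    (hS : S ∈ 𝓝 1) (m : ℕ) : ∀ᶠ a in l, ∀ k < m, f a ^ k ∈ S := by
  have hpow (k : ℕ) : ∀ᶠ a in l, f a ^ k ∈ S := by
    have hk := hf.pow k
    rw [one_pow] at hk
    exact hk hS
  simpa using (eventually_all_finset (range m)).2 fun k _ => hpow k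

namespace TrotterSum

variable {G : Type*} [Group G] [TopologicalSpace G] [IsTopologicalGroup G]
  {X X₁ X₂ : OneParamSubgroup G}

lemma tendsto_pow (hX : TrotterSum X X₁ X₂) (t : ℝ) :
    Tendsto (fun n : ℕ => (X₁.toFun (t / n) * X₂.toFun (t / n)) ^ n) atTop (𝓝 (X.toFun t)) := by
  have h : Tendsto (fun n : ℕ => (X.toFun t)⁻¹ * (X₁.toFun (t / n) * X₂.toFun (t / n)) ^ n)
      atTop (𝓝 1) := fun W hW => by
    obtain ⟨N, hN⟩ := hX {t} isCompact_singleton W hW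
    exact eventually_atTop.2 ⟨N, fun n hn => hN n hn t rfl⟩
  simpa using (tendsto_const_nhds (x := X.toFun t)).mul h

lemma eventually_forall_lt_pow_mem (hX : TrotterSum X X₁ X₂) {S : Set G} (hS : S ∈ 𝓝 1) :
    ∀ᶠ t in 𝓝 0, ∀ᶠ n : ℕ in atTop, ∀ k < n,
      (X₁.toFun (t / n) * X₂.toFun (t / n)) ^ k ∈ S := by
  obtain ⟨S₀, hS₀, hS₀S⟩ := exists_nhds_one_split hS
  obtain ⟨N, hN⟩ := hX (Set.Icc (-1) 1) isCompact_Icc S₀ hS₀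
  obtain ⟨ε, hε, hXε⟩ := Metric.eventually_nhds_iff.1 (X.tendsto_nhds_zero hS₀)
  filter_upwards [Metric.ball_mem_nhds 0 (lt_min hε one_pos)] with t ht
  have hstep : Tendsto (fun n : ℕ => X₁.toFun (t / n) * X₂.toFun (t / n)) atTop (𝓝 1) := by
    have h0 := tendsto_const_div_atTop_nhds_zero_nat t
    simpa using (X₁.tendsto_nhds_zero.comp h0).mul (X₂.tendsto_nhds_zero.comp h0)
  filter_upwards [hstep.eventually_forall_lt_pow_mem hS (N + 1)] with n hsmall k hk
  rcases lt_or_ge k (N + 1) with hkN | hkN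
  · exact hsmall k hkN
  -- For `k ≥ N` the `k`-th power is itself a Trotter approximant, of `X` at `τ = k t / n`.
  set τ : ℝ := k * (t / n)
  have hk0 : (k : ℝ) ≠ 0 := by norm_cast; omega
  have hτ : |τ| < min ε 1 := calc
    |τ| = k / n * |t| := by rw [abs_mul, abs_div, Nat.abs_cast, Nat.abs_cast]; ring
    _ ≤ |t| := mul_le_of_le_one_left (abs_nonneg t)
      (div_le_one_of_le₀ (by exact_mod_cast hk.le) n.cast_nonneg)
    _ < min ε 1 := by simpa using ht
  have happrox := hN k (by omega) τ (abs_le.1 (hτ.le.trans (min_le_right _ _)))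
  rw [mul_div_cancel_left₀ _ hk0] at happrox
  have hprod := hS₀S _ (hXε (by simpa using hτ.trans_le (min_le_left _ _))) _ happrox
  rwa [mul_inv_cancel_left] at hprod

end TrotterSum

section Representation

variable {M Y : Type*} [Monoid M] [AddCommGroup Y] [Module ℝ Y] [TopologicalSpace Y]
  [IsTopologicalAddGroup Y]

lemma inv_smul_map_pow_sub_sub_eq_sum (ρ : M →* (Y →L[ℝ] Y)) (g : M) (y w : Y) {n : ℕ}
    (hn : n ≠ 0) (s : ℝ) :
    (n * s)⁻¹ • (ρ (g ^ n) y - y) - w =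
      ∑ k ∈ range n, (n : ℝ)⁻¹ • (ρ (g ^ k) (s⁻¹ • (ρ g y - y)) - w) := by
  have hgeom : ∑ k ∈ range n, ρ (g ^ k) (ρ g y - y) = ρ (g ^ n) y - y := by
    simpa [map_pow] using congr($(geom_sum_mul (ρ g) n) y)
  simp only [sum_sub_distrib, map_smul, ← smul_sum, hgeom, sum_const, card_range]
  rw [smul_sub (n : ℝ)⁻¹, smul_smul, mul_inv, ← Nat.cast_smul_eq_nsmul ℝ, smul_smul,
    inv_mul_cancel₀ (Nat.cast_ne_zero.2 hn), one_smul]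

lemma tendsto_inv_smul_map_mul_sub [TopologicalSpace M] (ρ : M →* (Y →L[ℝ] Y))
    (hρ : Continuous fun p : M × Y => ρ p.1 p.2) {l : Filter ℝ} {a b : ℝ → M}
    (ha : Tendsto a l (𝓝 1)) {y z₁ z₂ : Y}
    (hz₁ : Tendsto (fun s => s⁻¹ • (ρ (a s) y - y)) l (𝓝 z₁))
    (hz₂ : Tendsto (fun s => s⁻¹ • (ρ (b s) y - y)) l (𝓝 z₂)) :
    Tendsto (fun s => s⁻¹ • (ρ (a s * b s) y - y)) l (𝓝 (z₁ + z₂)) := by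
  have hcomp : Tendsto (fun s => ρ (a s) (s⁻¹ • (ρ (b s) y - y))) l (𝓝 z₂) := by
    simpa only [Function.comp_def, map_one, one_apply_eq_self] using
      (hρ.tendsto (1, z₂)).comp (ha.prodMk_nhds hz₂)
  refine (hz₁.add hcomp).congr fun s => ?_
  simp only [map_mul, mul_apply_eq_comp, map_smul, map_sub, smul_sub]
  abel

end Representation

theorem TrotterSum.tendsto_inv_smul_map_sub {G Y : Type*} [Group G] [TopologicalSpace G]
    [IsTopologicalGroup G] [AddCommGroup Y] [Module ℝ Y] [TopologicalSpace Y]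
    [IsTopologicalAddGroup Y] [ContinuousSMul ℝ Y] [LocallyConvexSpace ℝ Y]
    (ρ : G →* (Y →L[ℝ] Y)) (hρ : Continuous fun p : G × Y => ρ p.1 p.2)
    {X X₁ X₂ : OneParamSubgroup G} (hX : TrotterSum X X₁ X₂) {y w : Y}
    (hw : Tendsto (fun s => s⁻¹ • (ρ (X₁.toFun s * X₂.toFun s) y - y)) (𝓝[>] 0) (𝓝 w)) :
    Tendsto (fun t => t⁻¹ • (ρ (X.toFun t) y - y)) (𝓝[>] 0) (𝓝 w) := by
  rw [← tendsto_sub_nhds_zero_iff, (nhds_hasBasis_absConvex_closed ℝ Y).tendsto_right_iff]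
  rintro U ⟨hU, hUclosed, -, hUconv⟩
  have hnear : ∀ᶠ p in 𝓝 ((1 : G), w), ρ p.1 p.2 - w ∈ U := by
    have hsub := (hρ.tendsto (1, w)).sub_const w
    rw [map_one, one_apply_eq_self, sub_self] at hsub
    exact hsub hU
  obtain ⟨S, hS, B, hB, hSB⟩ := mem_nhds_prod_iff.1 hnear
  filter_upwards [self_mem_nhdsWithin, nhdsWithin_le_nhds (hX.eventually_forall_lt_pow_mem hS)]
    with t (ht : 0 < t) hpow
  have hlim : Tendsto
      (fun n : ℕ => t⁻¹ • (ρ ((X₁.toFun (t / n) * X₂.toFun (t / n)) ^ n) y - y) - w)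
      atTop (𝓝 (t⁻¹ • (ρ (X.toFun t) y - y) - w)) := by
    have hpowy := (hρ.tendsto (X.toFun t, y)).comp
      ((hX.tendsto_pow t).prodMk_nhds (tendsto_const_nhds (x := y)))
    exact ((hpowy.sub_const y).const_smul t⁻¹).sub_const w
  have hsteps : Tendsto (fun n : ℕ => t / n) atTop (𝓝[>] 0) :=
    tendsto_nhdsWithin_iff.2 ⟨tendsto_const_div_atTop_nhds_zero_nat t,
      eventually_atTop.2 ⟨1, fun n hn => div_pos ht (by exact_mod_cast hn)⟩⟩
  refine hUclosed.mem_of_tendsto hlim ?_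
  filter_upwards [hpow, hsteps.eventually (hw hB), eventually_ne_atTop 0] with n hpow hv hn
  have hsum := inv_smul_map_pow_sub_sub_eq_sum ρ (X₁.toFun (t / n) * X₂.toFun (t / n)) y w hn
    (t / n)
  rw [mul_div_cancel₀ _ (Nat.cast_ne_zero.2 hn)] at hsum
  rw [hsum]
  exact hUconv.sum_mem (fun _ _ => by positivity) (by simp [hn])
    fun k hk => hSB (Set.mk_mem_prod (hpow k (mem_range.1 hk)) hv)

theorem dPi_add_of_trotterSum_general
    {G Y : Type*} [Group G] [TopologicalSpace G] [IsTopologicalGroup G]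
    [AddCommGroup Y] [Module ℝ Y] [TopologicalSpace Y] [IsTopologicalAddGroup Y]
    [ContinuousSMul ℝ Y] [LocallyConvexSpace ℝ Y] [T2Space Y]
    (π : G → Y →L[ℝ] Y)
    (hπ_one : π 1 = ContinuousLinearMap.id ℝ Y)
    (hπ_mul : ∀ g h : G, π (g * h) = (π g).comp (π h))
    (hπ_cont : Continuous fun p : G × Y => π p.1 p.2)
    (y : Y)
    (X X₁ X₂ : OneParamSubgroup G) (hX : TrotterSum X X₁ X₂)
    (z z₁ z₂ : Y)
    (hz : Tendsto (fun t : ℝ => t⁻¹ • (π (X.toFun t) y - y)) (𝓝[≠] (0 : ℝ)) (𝓝 z))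
    (hz₁ : Tendsto (fun t : ℝ => t⁻¹ • (π (X₁.toFun t) y - y)) (𝓝[≠] (0 : ℝ)) (𝓝 z₁))
    (hz₂ : Tendsto (fun t : ℝ => t⁻¹ • (π (X₂.toFun t) y - y)) (𝓝[≠] (0 : ℝ)) (𝓝 z₂)) :
    z = z₁ + z₂ := by
  let ρ : G →* (Y →L[ℝ] Y) := { toFun := π, map_one' := hπ_one, map_mul' := hπ_mul }
  have hstep := tendsto_inv_smul_map_mul_sub ρ hπ_cont
    (X₁.tendsto_nhds_zero.mono_left nhdsWithin_le_nhds) hz₁ hz₂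
  have hsum := hX.tendsto_inv_smul_map_sub ρ hπ_cont (hstep.mono_left (nhdsGT_le_nhdsNE 0))
  exact tendsto_nhds_unique (hz.mono_left (nhdsGT_le_nhdsNE 0)) hsum

theorem dPi_add_of_trotterSum
    {G Y : Type*} [Group G] [TopologicalSpace G] [IsTopologicalGroup G]
    [AddCommGroup Y] [Module ℝ Y] [TopologicalSpace Y] [IsTopologicalAddGroup Y]
    [ContinuousSMul ℝ Y] [LocallyConvexSpace ℝ Y] [T2Space Y]
    (π : G → Y →L[ℝ] Y)
    (hπ_one : π 1 = ContinuousLinearMap.id ℝ Y)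
    (hπ_mul : ∀ g h : G, π (g * h) = (π g).comp (π h))
    (hπ_cont : Continuous fun p : G × Y => π p.1 p.2)
    (hequi : ∃ V ∈ 𝓝 (1 : G), ∀ U ∈ 𝓝 (0 : Y), ∃ U' ∈ 𝓝 (0 : Y),
      ∀ g ∈ V, ∀ z ∈ U', π g z ∈ U)
    (y : Y)
    (hall : ∀ Z : OneParamSubgroup G, ∃ w : Y,
      Tendsto (fun t : ℝ => t⁻¹ • (π (Z.toFun t) y - y)) (𝓝[≠] (0 : ℝ)) (𝓝 w))
    (X X₁ X₂ : OneParamSubgroup G) (hX : TrotterSum X X₁ X₂)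
    (z z₁ z₂ : Y)
    (hz : Tendsto (fun t : ℝ => t⁻¹ • (π (X.toFun t) y - y)) (𝓝[≠] (0 : ℝ)) (𝓝 z))
    (hz₁ : Tendsto (fun t : ℝ => t⁻¹ • (π (X₁.toFun t) y - y)) (𝓝[≠] (0 : ℝ)) (𝓝 z₁))
    (hz₂ : Tendsto (fun t : ℝ => t⁻¹ • (π (X₂.toFun t) y - y)) (𝓝[≠] (0 : ℝ)) (𝓝 z₂)) :
    z = z₁ + z₂ :=
  dPi_add_of_trotterSum_general π hπ_one hπ_mul hπ_cont y X X₁ X₂ hX z z₁ z₂ hz hz₁ hz₂
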